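/- Let f : F_p^2 → ℚ be a function that is equidistributed in every direction (the sum of f along each line of each direction is the same constant for that direction) and whose sum along every line is zero. Then f is identically zero. -/

import Mathlib

/-!
Summing the line sums through a point `x` over all `p + 1` directions counts `x` once per
direction and every other point exactly once, since two points span a unique line. Hence that
sum is `p • f x + ∑ y, f y`. All line sums vanish, and so does the total (the vertical lines
partition the plane), so `p • f x = 0`.
-/

/-- Sum of `f` over the line through `x` with direction vector `u`. -/
def lineSum (p : ℕ) [Fact p.Prime] (f : ZMod p × ZMod p → ℚ)
    (u x : ZMod p × ZMod p) : ℚ :=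
  ∑ t : ZMod p, f (x + t • u)

/-- Direction vectors of the `p+1` directions: `some m` has slope `m`, `none` is vertical. -/
def dirVec (p : ℕ) : Option (ZMod p) → ZMod p × ZMod p
  | none => (0, 1)
  | some m => (1, m)

/-- `f` is equidistributed in the direction of the vector `u`. -/
def FEquidistributed (p : ℕ) [Fact p.Prime] (f : ZMod p × ZMod p → ℚ)
    (u : ZMod p × ZMod p) : Prop :=
  ∀ x y : ZMod p × ZMod p, lineSum p f u x = lineSum p f u y

section LinesThroughOrigin

variable {p : ℕ} [Fact p.Prime] {M : Type*} [AddCommMonoid M]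

theorem sum_slope_line_eq_sum_column (g : ZMod p × ZMod p → M) {t : ZMod p} (ht : t ≠ 0) :
    ∑ m : ZMod p, g (t, t * m) = ∑ s : ZMod p, g (t, s) :=
  Fintype.sum_equiv (Equiv.mulLeft₀ t ht) _ _ fun _ => rfl

theorem sum_sum_smul_dirVec (g : ZMod p × ZMod p → M) :
    ∑ d : Option (ZMod p), ∑ t : ZMod p, g (t • dirVec p d) = p • g 0 + ∑ v, g v := by
  have hvertical : ∑ t : ZMod p, g (t • dirVec p none) = ∑ s, g (0, s) := by
    simp [dirVec]
  have hslopes : ∑ m : ZMod p, ∑ t : ZMod p, g (t • dirVec p (some m))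
      = p • g 0 + ∑ t ∈ Finset.univ.erase 0, ∑ s, g (t, s) := by
    simp only [dirVec, Prod.smul_mk, smul_eq_mul, mul_one]
    rw [Finset.sum_comm, ← Finset.add_sum_erase _ _ (Finset.mem_univ 0)]
    congr 1
    · simp [ZMod.card, Prod.mk_zero_zero]
    · exact Finset.sum_congr rfl fun t ht =>
        sum_slope_line_eq_sum_column g (Finset.ne_of_mem_erase ht)
  rw [Fintype.sum_option, hvertical, hslopes, add_left_comm,
    Finset.add_sum_erase _ (fun t => ∑ s, g (t, s)) (Finset.mem_univ 0), Fintype.sum_prod_type]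

end LinesThroughOrigin

section LineSums

variable {p : ℕ} [Fact p.Prime]

theorem sum_lineSum_dirVec (f : ZMod p × ZMod p → ℚ) (x : ZMod p × ZMod p) :
    ∑ d, lineSum p f (dirVec p d) x = p * f x + ∑ y, f y := by
  simp only [lineSum]
  rw [sum_sum_smul_dirVec (fun v => f (x + v)), nsmul_eq_mul, add_zero]
  exact congrArg _ (Fintype.sum_equiv (Equiv.addLeft x) _ f fun _ => rfl)

theorem sum_eq_sum_lineSum_vertical (f : ZMod p × ZMod p → ℚ) :
    ∑ y, f y = ∑ a : ZMod p, lineSum p f (dirVec p none) (a, 0) := by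
  simp [lineSum, dirVec, Fintype.sum_prod_type]

end LineSums

theorem stmt_11_general (p : ℕ) [Fact p.Prime] (f : ZMod p × ZMod p → ℚ)
    (hzero : ∀ (d : Option (ZMod p)) (x : ZMod p × ZMod p), lineSum p f (dirVec p d) x = 0) :
    f = 0 := by
  funext x
  have htotal : ∑ y, f y = 0 := by
    simp [sum_eq_sum_lineSum_vertical, hzero]
  have hpx : (p : ℚ) * f x = 0 := by
    simpa [hzero, htotal] using (sum_lineSum_dirVec f x).symm
  exact (mul_eq_zero.1 hpx).resolve_left (Nat.cast_ne_zero.2 (Fact.out : p.Prime).ne_zero)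

theorem stmt_11 (p : ℕ) [Fact p.Prime] (f : ZMod p × ZMod p → ℚ)
    (hequi : ∀ d : Option (ZMod p), FEquidistributed p f (dirVec p d))
    (hzero : ∀ (d : Option (ZMod p)) (x : ZMod p × ZMod p), lineSum p f (dirVec p d) x = 0) :
    f = 0 :=
  stmt_11_general p f hzero
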